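/- Let ω(t) = (4/|w|²)√-1 dw∧dw̄ + ((2+t/2)/y²)√-1 dz∧dz̄ + (2i/(yw))√-1 dw∧dz̄ - (2i/(yw̄))√-1 dz∧dw̄ on H×ℂ*. Then det(g(t)) = (1+t/2)·4/(y²|w|²), ω(t) is a positive-definite Hermitian metric for all t ≥ 0, and ∂ω(t)/∂t = -Ric(ω(t)); i.e., ω(t) solves the Chern-Ricci flow for all t ∈ [0,∞). -/

import Mathlib

open Complex
open scoped ComplexOrder

/-- Wirtinger derivative `∂/∂z_i` (i = 0 is `z`, i = 1 is `w`) on `ℂ × ℂ`. -/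
noncomputable def wd (i : Fin 2) (f : ℂ × ℂ → ℂ) (p : ℂ × ℂ) : ℂ :=
  if i = 0 then (fderiv ℝ f p (1, 0) - Complex.I * fderiv ℝ f p (Complex.I, 0)) / 2
  else (fderiv ℝ f p (0, 1) - Complex.I * fderiv ℝ f p (0, Complex.I)) / 2

/-- Wirtinger derivative `∂/∂z̄_i` on `ℂ × ℂ`. -/
noncomputable def wdb (i : Fin 2) (f : ℂ × ℂ → ℂ) (p : ℂ × ℂ) : ℂ :=
  if i = 0 then (fderiv ℝ f p (1, 0) + Complex.I * fderiv ℝ f p (Complex.I, 0)) / 2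
  else (fderiv ℝ f p (0, 1) + Complex.I * fderiv ℝ f p (0, Complex.I)) / 2

/-- The coefficient matrix of
`ω(t) = (4/|w|²)√-1 dw∧dw̄ + ((2+t/2)/y²)√-1 dz∧dz̄ + (2i/(yw))√-1 dw∧dz̄ - (2i/(yw̄))√-1 dz∧dw̄`
on `H×ℂ*` (index 0 = `z`, index 1 = `w`). -/
noncomputable def gVt (t : ℝ) (p : ℂ × ℂ) : Matrix (Fin 2) (Fin 2) ℂ :=
  !![(((2 + t / 2) / p.1.im ^ 2 : ℝ) : ℂ), -2 * Complex.I / ((p.1.im : ℂ) * (starRingEnd ℂ) p.2);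
     2 * Complex.I / ((p.1.im : ℂ) * p.2), ((4 / Complex.normSq p.2 : ℝ) : ℂ)]

/-!
Writing `g(t) = !![a, b; b̄, d]`, one has `a d - |b|² = (1 + t/2)·4/(y²|w|²) > 0`, which gives
both the determinant and, by completing the square, positive definiteness. Hence
`log det g(t) = log((1 + t/2)·4) - 2 log y - log |w|²`, with `∂̄`-derivatives `-i/y` and `-1/w̄`.
The first depends on `z` only and the second is antiholomorphic, so `∂∂̄ log det g(t)` is
`1/(2y²)` in the `dz∧dz̄` slot and zero elsewhere, which is exactly `∂g/∂t`.
-/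

open ComplexConjugate Matrix Topology ContinuousLinearMap

namespace Matrix

lemma det_fin_two_star (a d : ℝ) (b : ℂ) :
    (!![(a : ℂ), b; star b, d]).det = ((a * d - normSq b : ℝ) : ℂ) := by
  rw [det_fin_two_of, star_def, mul_conj]
  push_cast
  ring

lemma posDef_fin_two_of_normSq_lt {a d : ℝ} {b : ℂ} (ha : 0 < a) (hb : normSq b < a * d) :
    (!![(a : ℂ), b; star b, d]).PosDef := by
  let B : Matrix (Fin 2) (Fin 2) ℂ := !![1, b / a; 0, 1]
  have hB : Function.Injective B.mulVec := by
    rw [mulVec_injective_iff_isUnit, isUnit_iff_isUnit_det]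
    simp [B]
  have hD : (diagonal ![(a : ℂ), ((d - normSq b / a : ℝ) : ℂ)]).PosDef := by
    refine PosDef.diagonal fun i => ?_
    fin_cases i
    · simpa using ha
    · simp only [Fin.mk_one, cons_val_one, cons_val_fin_one, zero_lt_real, sub_pos]
      rwa [div_lt_iff₀' ha]
  have ha' : (a : ℂ) ≠ 0 := ofReal_ne_zero.mpr ha.ne'
  convert hD.conjTranspose_mul_mul_same hB using 1
  ext i j
  fin_cases i <;> fin_cases j <;>
    simp only [B, mul_apply, Fin.sum_univ_two, conjTranspose_apply, diagonal_apply, of_apply,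
      cons_val', cons_val_zero, cons_val_one, cons_val_fin_one, Fin.zero_eta, Fin.mk_one,
      Fin.isValue, RCLike.star_def, map_one, map_zero, map_div₀, conj_ofReal, ofReal_sub,
      ofReal_div, ← mul_conj, zero_ne_one, one_ne_zero, ↓reduceIte, one_mul, mul_one, zero_mul, mul_zero,
      add_zero]
  · field_simp
  · field_simp
  · field_simp
    ring

end Matrix

section Metric

variable (t : ℝ) (p : ℂ × ℂ)

lemma gVt_eq : gVt t p = !![(((2 + t / 2) / p.1.im ^ 2 : ℝ) : ℂ), -2 * I / (p.1.im * conj p.2);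
    star (-2 * I / (p.1.im * conj p.2)), ((4 / normSq p.2 : ℝ) : ℂ)] := by
  ext i j
  fin_cases i <;> fin_cases j <;> simp [gVt]

lemma normSq_gVt_zero_one :
    normSq (-2 * I / (p.1.im * conj p.2)) = 4 / (p.1.im ^ 2 * normSq p.2) := by
  simp only [normSq_div, normSq_mul, normSq_neg, normSq_ofNat, normSq_I, normSq_ofReal, normSq_conj]
  ring

lemma det_gVt : (gVt t p).det = (((1 + t / 2) * 4 / (p.1.im ^ 2 * normSq p.2) : ℝ) : ℂ) := by
  rw [gVt_eq, det_fin_two_star, normSq_gVt_zero_one]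
  congr 1
  ring

variable {t p} in
lemma posDef_gVt (ht : -2 < t) (hy : p.1.im ≠ 0) (hw : p.2 ≠ 0) : (gVt t p).PosDef := by
  have hN : 0 < normSq p.2 := normSq_pos.mpr hw
  have hy2 : 0 < p.1.im ^ 2 := by positivity
  have ht' : 0 < 1 + t / 2 := by linarith
  rw [gVt_eq]
  refine posDef_fin_two_of_normSq_lt (div_pos (by linarith) hy2) ?_
  rw [normSq_gVt_zero_one, ← sub_pos]
  calc 0 < (1 + t / 2) * 4 / (p.1.im ^ 2 * normSq p.2) := by positivity
    _ = _ := by ring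

noncomputable def negRicci : Matrix (Fin 2) (Fin 2) ℂ :=
  !![1 / (2 * (p.1.im : ℂ) ^ 2), 0; 0, 0]

lemma hasDerivAt_gVt (i j : Fin 2) : HasDerivAt (fun s => gVt s p i j) (negRicci p i j) t := by
  fin_cases i <;> fin_cases j <;> simp only [gVt, negRicci, of_apply, cons_val', cons_val_zero,
    cons_val_one, empty_val', cons_val_fin_one, Fin.zero_eta, Fin.mk_one]
  · have : HasDerivAt (fun s : ℝ => (2 + s / 2) / p.1.im ^ 2) (1 / 2 / p.1.im ^ 2) t :=
      (((hasDerivAt_id t).div_const 2).const_add 2).div_const _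
    convert this.ofReal_comp using 1
    push_cast
    ring
  all_goals exact hasDerivAt_const _ _

end Metric

section LogDet

noncomputable def logDet (C : ℝ) (q : ℂ × ℂ) : ℂ :=
  ((Real.log (C / (q.1.im ^ 2 * normSq q.2)) : ℝ) : ℂ)

variable {C : ℝ} {q : ℂ × ℂ}

lemma eventually_im_ne_zero_and_ne_zero (hy : q.1.im ≠ 0) (hw : q.2 ≠ 0) :
    ∀ᶠ q' in 𝓝 q, q'.1.im ≠ 0 ∧ q'.2 ≠ 0 :=
  ((continuous_im.comp continuous_fst).continuousAt.eventually_ne hy).and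
    (continuous_snd.continuousAt.eventually_ne hw)

lemma logDet_eq (hC : C ≠ 0) (hy : q.1.im ≠ 0) (hw : q.2 ≠ 0) :
    logDet C q = ((Real.log C - 2 * Real.log q.1.im - Real.log (normSq q.2) : ℝ) : ℂ) := by
  rw [logDet, Real.log_div hC (mul_ne_zero (pow_ne_zero 2 hy) (normSq_pos.mpr hw).ne'),
    Real.log_mul (pow_ne_zero 2 hy) (normSq_pos.mpr hw).ne', Real.log_pow]
  push_cast
  ring

lemma hasFDerivAt_logDet (hC : C ≠ 0) (hy : q.1.im ≠ 0) (hw : q.2 ≠ 0) :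
    HasFDerivAt (logDet C) (ofRealCLM ∘L (-((2 : ℝ) • q.1.im⁻¹ • (imCLM ∘L fst ℝ ℂ ℂ)) -
      (normSq q.2)⁻¹ • 2 • (innerSL ℝ q.2 ∘L snd ℝ ℂ ℂ))) q := by
  have hlogy : HasFDerivAt (fun q : ℂ × ℂ => Real.log q.1.im)
      (q.1.im⁻¹ • (imCLM ∘L fst ℝ ℂ ℂ)) q :=
    (Real.hasDerivAt_log hy).comp_hasFDerivAt (f := fun q : ℂ × ℂ => q.1.im) q
      (imCLM ∘L fst ℝ ℂ ℂ).hasFDerivAt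
  have hN : HasFDerivAt (fun q : ℂ × ℂ => normSq q.2) (2 • (innerSL ℝ q.2 ∘L snd ℝ ℂ ℂ)) q := by
    simpa only [normSq_eq_norm_sq] using (hasFDerivAt_snd (p := q)).norm_sq
  have hlogN := (Real.hasDerivAt_log (normSq_pos.mpr hw).ne').comp_hasFDerivAt q hN
  have hsplit :=
    ofRealCLM.hasFDerivAt.comp q (((hlogy.const_mul 2).const_sub (Real.log C)).sub hlogN)
  refine hsplit.congr_of_eventuallyEq ?_
  filter_upwards [eventually_im_ne_zero_and_ne_zero hy hw] with q' hq'
  exact logDet_eq hC hq'.1 hq'.2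

lemma wdb_zero_logDet (hC : C ≠ 0) (hy : q.1.im ≠ 0) (hw : q.2 ≠ 0) :
    wdb 0 (logDet C) q = -I / q.1.im := by
  rw [wdb, if_pos rfl, (hasFDerivAt_logDet hC hy hw).fderiv]
  simp only [ContinuousLinearMap.comp_apply, _root_.sub_apply, _root_.neg_apply,
    _root_.smul_apply, coe_fst', coe_snd', imCLM_apply, ofRealCLM_apply, coe_innerSL_apply,
    inner_zero_right, one_im, I_im, smul_zero, smul_eq_mul]
  push_cast
  ring

lemma wdb_one_logDet (hC : C ≠ 0) (hy : q.1.im ≠ 0) (hw : q.2 ≠ 0) :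
    wdb 1 (logDet C) q = -(conj q.2)⁻¹ := by
  rw [wdb, if_neg one_ne_zero, (hasFDerivAt_logDet hC hy hw).fderiv]
  simp only [ContinuousLinearMap.comp_apply, _root_.sub_apply, _root_.neg_apply,
    _root_.smul_apply, coe_fst', coe_snd', imCLM_apply, ofRealCLM_apply, coe_innerSL_apply,
    Complex.inner, zero_im, smul_eq_mul, one_mul, conj_re, mul_re, I_re, I_im, conj_im]
  push_cast
  rw [inv_def (conj q.2), conj_conj, normSq_conj]
  generalize normSq q.2 = N
  conv_rhs => rw [← re_add_im q.2]
  push_cast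
  ring

lemma hasFDerivAt_wdb_zero_logDet (hC : C ≠ 0) (hy : q.1.im ≠ 0) (hw : q.2 ≠ 0) :
    HasFDerivAt (wdb 0 (logDet C))
      (-I • ofRealCLM ∘L (-(q.1.im ^ 2)⁻¹ • (imCLM ∘L fst ℝ ℂ ℂ))) q := by
  have hinv :
      HasFDerivAt (fun q : ℂ × ℂ => q.1.im⁻¹) (-(q.1.im ^ 2)⁻¹ • (imCLM ∘L fst ℝ ℂ ℂ)) q :=
    (hasDerivAt_inv hy).comp_hasFDerivAt (f := fun q : ℂ × ℂ => q.1.im) q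
      (imCLM ∘L fst ℝ ℂ ℂ).hasFDerivAt
  refine ((ofRealCLM.hasFDerivAt.comp q hinv).const_mul (-I)).congr_of_eventuallyEq ?_
  filter_upwards [eventually_im_ne_zero_and_ne_zero hy hw] with q' hq'
  rw [wdb_zero_logDet hC hq'.1 hq'.2]
  simp [div_eq_mul_inv]

lemma hasFDerivAt_wdb_one_logDet (hC : C ≠ 0) (hy : q.1.im ≠ 0) (hw : q.2 ≠ 0) :
    HasFDerivAt (wdb 1 (logDet C))
      (-(-(conj q.2 ^ 2)⁻¹ • (conjCLE.toContinuousLinearMap ∘L snd ℝ ℂ ℂ))) q := by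
  have hinv := (hasDerivAt_inv ((map_ne_zero _).mpr hw)).comp_hasFDerivAt
    (f := fun q : ℂ × ℂ => conj q.2) q (conjCLE.toContinuousLinearMap ∘L snd ℝ ℂ ℂ).hasFDerivAt
  refine hinv.neg.congr_of_eventuallyEq ?_
  filter_upwards [eventually_im_ne_zero_and_ne_zero hy hw] with q' hq'
  exact wdb_one_logDet hC hq'.1 hq'.2

lemma wd_wdb_logDet (hC : C ≠ 0) (hy : q.1.im ≠ 0) (hw : q.2 ≠ 0) (i j : Fin 2) :
    wd i (wdb j (logDet C)) q = negRicci q i j := by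
  fin_cases i <;> fin_cases j <;>
    simp [wd, negRicci, (hasFDerivAt_wdb_zero_logDet hC hy hw).fderiv,
      (hasFDerivAt_wdb_one_logDet hC hy hw).fderiv, ← mul_assoc, I_mul_I, div_eq_mul_inv,
      mul_comm _ I]

end LogDet

/-- On `H×ℂ*`, `ω(t)` above satisfies
`det g(t) = (1+t/2)·4/(y²|w|²)`, it is a positive-definite Hermitian metric for all
`t ≥ 0`, and `∂ω(t)/∂t = -Ric(ω(t)) = √-1 ∂∂̄ log det g(t)` entrywise; i.e. `ω(t)`
solves the Chern-Ricci flow on `[0,∞)`. -/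
theorem stmt12 (t : ℝ) (ht : 0 ≤ t) (p : ℂ × ℂ) (hp : 0 < p.1.im) (hw : p.2 ≠ 0) :
    ((gVt t p).det = (((1 + t / 2) * 4 / (p.1.im ^ 2 * Complex.normSq p.2) : ℝ) : ℂ)) ∧
    (gVt t p).PosDef ∧
    (∀ i j : Fin 2,
      deriv (fun s : ℝ => gVt s p i j) t
        = wd i (wdb j (fun q =>
            ((Real.log ((1 + t / 2) * 4 / (q.1.im ^ 2 * Complex.normSq q.2)) : ℝ) : ℂ))) p) := by
  have hC : (1 + t / 2) * 4 ≠ 0 := by positivity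
  refine ⟨det_gVt t p, posDef_gVt (by linarith) hp.ne' hw, fun i j => ?_⟩
  rw [(hasDerivAt_gVt t p i j).deriv]
  exact (wd_wdb_logDet hC hp.ne' hw i j).symm
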